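/- Let Λ be a lattice of full rank in ℝ² with dual lattice Λ*. Then ω(Λ*) = ω(Λ). -/

import Mathlib

open scoped BigOperators

noncomputable section

/-- The multiplicative function `Π(x) = ∏ i |x_i|^{1/d}`. -/
def Pibar (d : ℕ) (x : Fin d → ℝ) : ℝ := ∏ i, |x i| ^ (1 / (d : ℝ))

/-- The Diophantine exponent of a lattice `Λ ⊆ ℝ^d` (sup-norm `‖·‖`). -/
def dioExp (d : ℕ) (Λ : Set (Fin d → ℝ)) : EReal :=
  sSup {g : EReal | ∃ γ : ℝ, g = (γ : EReal) ∧
    {x : Fin d → ℝ | x ∈ Λ ∧ Pibar d x ≤ ‖x‖ ^ (-γ)}.Infinite}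

/-- `Λ` is a lattice of full rank in `ℝ^d`. -/
def IsFullLattice (d : ℕ) (Λ : Set (Fin d → ℝ)) : Prop :=
  ∃ A : Matrix (Fin d) (Fin d) ℝ, A.det ≠ 0 ∧
    Λ = {x | ∃ z : Fin d → ℤ, x = A.mulVec fun i => (z i : ℝ)}

/-- The dual lattice `Λ* = {y : ⟨y,x⟩ ∈ ℤ for all x ∈ Λ}`. -/
def dualLattice (d : ℕ) (Λ : Set (Fin d → ℝ)) : Set (Fin d → ℝ) :=
  {y | ∀ x ∈ Λ, ∃ n : ℤ, ∑ i, y i * x i = (n : ℝ)}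

/-!
In the plane the dual lattice is a rotated and rescaled copy of the lattice: if `Λ = A ℤ²` and
`J (x₀, x₁) = (-x₁, x₀)`, then `⟨J (A u), A v⟩ = det A · (u₀ v₁ - u₁ v₀)`, whence
`Λ* = J ((det A)⁻¹ Λ)`. The rotation `J` preserves both `Π` and the sup-norm, so it does not change
the exponent. A homothety `x ↦ c x` multiplies `Π` and `|·|` by `|c|`, so it turns
`Π(x) ≤ |x|^{-γ}` into `Π(cx) ≤ |c|^{1+γ} |cx|^{-γ}`; the constant is absorbed by lowering `γ`
slightly, which costs only the finitely many lattice points of bounded norm.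
-/

open Filter Topology Pointwise Matrix

namespace IsFullLattice

variable {d : ℕ} {Λ : Set (Fin d → ℝ)}

theorem finite_norm_le (hΛ : IsFullLattice d Λ) (R : ℝ) : {x | x ∈ Λ ∧ ‖x‖ ≤ R}.Finite := by
  obtain ⟨A, hA, rfl⟩ := hΛ
  have hcast : Tendsto (fun z : Fin d → ℤ => fun i => (z i : ℝ)) cofinite (cocompact _) := by
    convert! Tendsto.pi_map_coprodᵢ fun _ => Int.tendsto_coe_cofinite
    · rw [coprodᵢ_cofinite]
    · rw [coprodᵢ_cocompact]
  have hA : IsClosedEmbedding A.mulVec :=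
    (toLin' A).isClosedEmbedding_of_injective (LinearMap.ker_eq_bot.2
      (mulVec_injective_iff_isUnit.2 ((A.isUnit_iff_isUnit_det).2 hA.isUnit)))
  have hfin := (hA.tendsto_cocompact.comp hcast).eventually
    (isCompact_closedBall (0 : Fin d → ℝ) R).compl_mem_cocompact
  refine (Filter.eventually_cofinite.1 hfin |>.image fun z => A *ᵥ fun i => (z i : ℝ)).subset ?_
  rintro _ ⟨⟨z, rfl⟩, hz⟩
  exact ⟨z, by simpa using hz, rfl⟩

theorem smul (hΛ : IsFullLattice d Λ) {c : ℝ} (hc : c ≠ 0) : IsFullLattice d (c • Λ) := by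
  obtain ⟨A, hA, rfl⟩ := hΛ
  refine ⟨c • A, by simp [hc, hA], ?_⟩
  ext x
  simp [Set.mem_smul_set, smul_mulVec, eq_comm]

end IsFullLattice

theorem Pibar_smul {d : ℕ} (hd : d ≠ 0) (c : ℝ) (x : Fin d → ℝ) :
    Pibar d (c • x) = |c| * Pibar d x := by
  have hc : (|c| ^ (1 / (d : ℝ))) ^ d = |c| := by
    rw [← Real.rpow_natCast, ← Real.rpow_mul (abs_nonneg c),
      one_div_mul_cancel (by exact_mod_cast hd), Real.rpow_one]
  simp only [Pibar, Pi.smul_apply, smul_eq_mul, abs_mul,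
    Real.mul_rpow (abs_nonneg _) (abs_nonneg _), Finset.prod_mul_distrib, Finset.prod_const,
    Finset.card_univ, Fintype.card_fin, hc]

theorem Pibar_smul_le_rpow_of_le {d : ℕ} (hd : d ≠ 0) {c γ γ' : ℝ} {x : Fin d → ℝ} (hc : c ≠ 0)
    (hγ : γ' < γ) (hx : Pibar d x ≤ ‖x‖ ^ (-γ))
    (hlarge : |c| ^ ((1 + γ) / (γ - γ')) ≤ ‖c • x‖) :
    Pibar d (c • x) ≤ ‖c • x‖ ^ (-γ') := by
  set s := |c|
  set t := ‖c • x‖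
  have hs : 0 < s := abs_pos.2 hc
  have ht : 0 < t := (Real.rpow_pos_of_pos hs _).trans_le hlarge
  have hxt : ‖x‖ = s⁻¹ * t := by simp [t, s, norm_smul, hc]
  have hst : s ^ (1 + γ) ≤ t ^ (γ - γ') := by
    calc s ^ (1 + γ) = (s ^ ((1 + γ) / (γ - γ'))) ^ (γ - γ') := by
          rw [← Real.rpow_mul hs.le, div_mul_cancel₀ _ (sub_ne_zero.2 hγ.ne')]
      _ ≤ t ^ (γ - γ') := by gcongr
  calc Pibar d (c • x) = s * Pibar d x := Pibar_smul hd c x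
    _ ≤ s * (s⁻¹ * t) ^ (-γ) := by rw [← hxt]; gcongr
    _ = s ^ (1 + γ) * t ^ (-γ) := by
          rw [Real.mul_rpow (inv_nonneg.2 hs.le) ht.le, Real.inv_rpow hs.le, ← Real.rpow_neg hs.le,
            neg_neg, ← mul_assoc, Real.rpow_add hs, Real.rpow_one]
    _ ≤ t ^ (γ - γ') * t ^ (-γ) := by gcongr
    _ = t ^ (-γ') := by rw [← Real.rpow_add ht]; ring_nf

def approxSet (d : ℕ) (Λ : Set (Fin d → ℝ)) (γ : ℝ) : Set (Fin d → ℝ) :=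
  {x | x ∈ Λ ∧ Pibar d x ≤ ‖x‖ ^ (-γ)}

theorem dioExp_eq (d : ℕ) (Λ : Set (Fin d → ℝ)) :
    dioExp d Λ = sSup {g : EReal | ∃ γ : ℝ, g = γ ∧ (approxSet d Λ γ).Infinite} := rfl

theorem EReal.sSup_coe_le_sSup_coe {P Q : ℝ → Prop} (h : ∀ γ γ', γ' < γ → P γ → Q γ') :
    sSup {g : EReal | ∃ γ : ℝ, g = γ ∧ P γ} ≤ sSup {g : EReal | ∃ γ : ℝ, g = γ ∧ Q γ} := by
  refine sSup_le fun _ ⟨γ, hg, hP⟩ => hg ▸ le_of_forall_lt_imp_le_of_dense fun b hb => ?_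
  induction b using EReal.rec with
  | bot => exact bot_le
  | coe γ' => exact le_sSup ⟨γ', rfl, h γ γ' (EReal.coe_lt_coe_iff.1 hb) hP⟩
  | top => exact absurd hb not_top_lt

theorem infinite_approxSet_smul {d : ℕ} (hd : d ≠ 0) {Λ : Set (Fin d → ℝ)}
    (hΛ : IsFullLattice d Λ) {c γ γ' : ℝ} (hc : c ≠ 0) (hγ : γ' < γ)
    (h : (approxSet d Λ γ).Infinite) : (approxSet d (c • Λ) γ').Infinite := by
  have hsmul : (c • approxSet d Λ γ).Infinite := h.image (MulAction.injective₀ hc).injOn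
  refine (hsmul.sdiff ((hΛ.smul hc).finite_norm_le (|c| ^ ((1 + γ) / (γ - γ'))))).mono ?_
  rintro _ ⟨⟨x, ⟨hxΛ, hx⟩, rfl⟩, hlarge⟩
  exact ⟨Set.smul_mem_smul_set hxΛ, Pibar_smul_le_rpow_of_le hd hc hγ hx
    (le_of_not_ge fun h => hlarge ⟨Set.smul_mem_smul_set hxΛ, h⟩)⟩

theorem dioExp_le_dioExp_smul {d : ℕ} (hd : d ≠ 0) {Λ : Set (Fin d → ℝ)}
    (hΛ : IsFullLattice d Λ) {c : ℝ} (hc : c ≠ 0) : dioExp d Λ ≤ dioExp d (c • Λ) :=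
  EReal.sSup_coe_le_sSup_coe fun _ _ hγ => infinite_approxSet_smul hd hΛ hc hγ

theorem dioExp_smul {d : ℕ} (hd : d ≠ 0) {Λ : Set (Fin d → ℝ)} (hΛ : IsFullLattice d Λ) {c : ℝ}
    (hc : c ≠ 0) : dioExp d (c • Λ) = dioExp d Λ := by
  refine le_antisymm ?_ (dioExp_le_dioExp_smul hd hΛ hc)
  simpa [inv_smul_smul₀ hc] using dioExp_le_dioExp_smul hd (hΛ.smul hc) (inv_ne_zero hc)

theorem dioExp_image {d : ℕ} {Λ : Set (Fin d → ℝ)} {f : (Fin d → ℝ) → Fin d → ℝ}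
    (hf : Function.Injective f) (hPibar : ∀ x, Pibar d (f x) = Pibar d x)
    (hnorm : ∀ x, ‖f x‖ = ‖x‖) : dioExp d (f '' Λ) = dioExp d Λ := by
  have himage : ∀ γ, approxSet d (f '' Λ) γ = f '' approxSet d Λ γ := by
    intro γ
    ext y
    constructor
    · rintro ⟨⟨x, hx, rfl⟩, hle⟩
      exact ⟨x, ⟨hx, by rwa [hPibar, hnorm] at hle⟩, rfl⟩
    · rintro ⟨x, ⟨hx, hle⟩, rfl⟩
      exact ⟨⟨x, hx, rfl⟩, by rwa [hPibar, hnorm]⟩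
  simp only [dioExp_eq, himage, Set.infinite_image_iff hf.injOn]

def quarterTurn (x : Fin 2 → ℝ) : Fin 2 → ℝ := ![-x 1, x 0]

theorem quarterTurn_injective : Function.Injective quarterTurn := by
  intro x y h
  have h0 := congrFun h 0
  have h1 := congrFun h 1
  simp only [quarterTurn, cons_val_zero, cons_val_one, neg_inj] at h0 h1
  ext i; fin_cases i <;> assumption

theorem Pibar_quarterTurn (x : Fin 2 → ℝ) : Pibar 2 (quarterTurn x) = Pibar 2 x := by
  simp [Pibar, quarterTurn, Fin.prod_univ_two, mul_comm]

theorem norm_quarterTurn (x : Fin 2 → ℝ) : ‖quarterTurn x‖ = ‖x‖ := by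
  simp [Pi.norm_def, Fin.univ_succ, quarterTurn, sup_comm]

theorem quarterTurn_smul (c : ℝ) (x : Fin 2 → ℝ) : quarterTurn (c • x) = c • quarterTurn x := by
  ext i; fin_cases i <;> simp [quarterTurn]

theorem sum_quarterTurn_mul (u v : Fin 2 → ℝ) :
    ∑ i, quarterTurn u i * v i = u 0 * v 1 - u 1 * v 0 := by
  simp [quarterTurn, Fin.sum_univ_two]; ring

theorem mulVec_cross_eq_det_mul (A : Matrix (Fin 2) (Fin 2) ℝ) (u v : Fin 2 → ℝ) :
    (A *ᵥ u) 0 * (A *ᵥ v) 1 - (A *ᵥ u) 1 * (A *ᵥ v) 0 = A.det * (u 0 * v 1 - u 1 * v 0) := by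
  simp [mulVec, dotProduct, Fin.sum_univ_two, det_fin_two]; ring

theorem sum_quarterTurn_inv_det_smul_mul {A : Matrix (Fin 2) (Fin 2) ℝ} (hA : A.det ≠ 0)
    (u v : Fin 2 → ℝ) :
    ∑ i, quarterTurn (A.det⁻¹ • A *ᵥ u) i * (A *ᵥ v) i = u 0 * v 1 - u 1 * v 0 := by
  simp only [quarterTurn_smul, Pi.smul_apply, smul_eq_mul, mul_assoc, ← Finset.mul_sum,
    sum_quarterTurn_mul, mulVec_cross_eq_det_mul, inv_mul_cancel_left₀ hA]

theorem dualLattice_eq_image_quarterTurn {A : Matrix (Fin 2) (Fin 2) ℝ} (hA : A.det ≠ 0) :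
    dualLattice 2 {x | ∃ z : Fin 2 → ℤ, x = A *ᵥ fun i => (z i : ℝ)} =
      quarterTurn '' (A.det⁻¹ • {x | ∃ z : Fin 2 → ℤ, x = A *ᵥ fun i => (z i : ℝ)}) := by
  ext y
  constructor
  · intro hy
    obtain ⟨n₀, hn₀⟩ := hy _ ⟨![1, 0], rfl⟩
    obtain ⟨n₁, hn₁⟩ := hy _ ⟨![0, 1], rfl⟩
    refine ⟨_, Set.smul_mem_smul_set ⟨![n₁, -n₀], rfl⟩, ?_⟩
    have key := sum_quarterTurn_inv_det_smul_mul hA fun i => ((![n₁, -n₀] : Fin 2 → ℤ) i : ℝ)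
    generalize quarterTurn _ = y' at key ⊢
    -- `y` and `y'` have the same pairings `n₀`, `n₁` with the columns of `A`
    refine vecMul_injective_iff_isUnit.2 ((A.isUnit_iff_isUnit_det).2 hA.isUnit) ?_
    have h₀ := key ![1, 0]
    have h₁ := key ![0, 1]
    simp only [mulVec, dotProduct, Fin.sum_univ_two, cons_val_zero, cons_val_one, cons_val_fin_one,
      Int.cast_neg, Int.cast_one, Int.cast_zero, mul_one, mul_zero, add_zero, zero_add, sub_zero,
      sub_neg_eq_add] at h₀ h₁ hn₀ hn₁
    ext j
    fin_cases j <;> simp only [vecMul, dotProduct, Fin.sum_univ_two, Fin.zero_eta, Fin.mk_one] <;>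
      linarith
  · rintro ⟨_, ⟨_, ⟨z, rfl⟩, rfl⟩, rfl⟩ _ ⟨w, rfl⟩
    exact ⟨z 0 * w 1 - z 1 * w 0, by push_cast; exact sum_quarterTurn_inv_det_smul_mul hA _ _⟩

/-- For a full-rank lattice `Λ ⊆ ℝ²`: `ω(Λ*) = ω(Λ)`. -/
theorem stmt_16 (Λ : Set (Fin 2 → ℝ)) (hΛ : IsFullLattice 2 Λ) :
    dioExp 2 (dualLattice 2 Λ) = dioExp 2 Λ := by
  obtain ⟨A, hA, rfl⟩ := hΛ
  rw [dualLattice_eq_image_quarterTurn hA,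
    dioExp_image quarterTurn_injective Pibar_quarterTurn norm_quarterTurn,
    dioExp_smul two_ne_zero ⟨A, hA, rfl⟩ (inv_ne_zero hA)]

end
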